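/- Let S and S' be sets of countable limit ordinals. If S Δ S' is stationary in ω₁ (i.e. every closed unbounded subset of ω₁ meets S Δ S'), then the linear orders Φ(S) and Φ(S') are not order-isomorphic. -/

import Mathlib

noncomputable section

open Set

/-- The first uncountable ordinal. -/
def omega1 : Ordinal := (Cardinal.aleph 1).ord

/-- `η_γ(S)`: the linear order `ℚ` if `γ ∉ S`, and `1 + ℚ` (i.e. `WithBot ℚ`) if `γ ∈ S`,
realized uniformly as a subset of `WithBot ℚ`. -/
def Eta (S : Set Ordinal) (γ : Ordinal) : Type := {x : WithBot ℚ // γ ∈ S ∨ x ≠ ⊥}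

instance (S : Set Ordinal) (γ : Ordinal) : LinearOrder (Eta S γ) :=
  inferInstanceAs (LinearOrder {x : WithBot ℚ // γ ∈ S ∨ x ≠ ⊥})

/-- `Φ(S,α,β)`: the lexicographic sum `Σ_{α ≤ γ < β} η_γ(S)`. -/
def Phi (S : Set Ordinal) (α β : Ordinal) : Type 1 :=
  Lex (Σ γ : Ico α β, Eta S γ.1)

instance (S : Set Ordinal) (α β : Ordinal) : LinearOrder (Phi S α β) :=
  inferInstanceAs (LinearOrder (Lex (Σ γ : Ico α β, Eta S γ.1)))

/-- `C ⊆ ω₁` is closed unbounded. -/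
def IsClubOmega1 (C : Set Ordinal) : Prop :=
  (∀ c ∈ C, c < omega1) ∧
  (∀ δ < omega1, ∃ c ∈ C, δ < c) ∧
  (∀ X ⊆ C, X.Nonempty → sSup X < omega1 → sSup X ∈ C)

section Aux
open Cardinal Ordinal

lemma omega1_isLimit : Order.IsSuccLimit omega1 := Cardinal.isSuccLimit_ord (Cardinal.aleph0_le_aleph 1)

lemma omega1_pos : 0 < omega1 := omega1_isLimit.pos

lemma bddAbove_of_lt_omega1 {A : Set Ordinal} (h : ∀ a ∈ A, a < omega1) : BddAbove A :=
  ⟨omega1, fun a ha => (h a ha).le⟩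

lemma csSup_lt_omega1 {A : Set Ordinal} (hA : A.Countable) (h : ∀ a ∈ A, a < omega1) :
    sSup A < omega1 := by
  rcases A.eq_empty_or_nonempty with rfl | hne
  · simpa using omega1_pos
  · obtain ⟨g, hg⟩ := hA.exists_eq_range hne
    subst hg
    have hω : omega1 = ω_ 1 := by
      rw [omega1, ← Cardinal.ord_aleph]
    rw [hω] at h ⊢
    exact Ordinal.iSup_lt_omega_one (f := g) fun n => (h _ (mem_range_self n) :)

lemma countable_Iio_of_lt_omega1 {δ : Ordinal.{0}} (hδ : δ < omega1) : (Iio δ).Countable := by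
  rw [Cardinal.countable_iff_lt_aleph_one, Ordinal.mk_Iio_ordinal]
  have h1 : δ.card ≤ ℵ₀ := by
    have h2 := Cardinal.lt_ord.mp hδ
    rwa [← Cardinal.succ_aleph0, Order.lt_succ_iff] at h2
  calc Cardinal.lift.{1} δ.card ≤ Cardinal.lift.{1} ℵ₀ := Cardinal.lift_le.mpr h1
    _ = ℵ₀ := Cardinal.lift_aleph0
    _ < ℵ₁ := Cardinal.aleph0_lt_aleph_one

end Aux

def PhiIdx {S : Set Ordinal} (x : Phi S 0 omega1) : Ordinal := (ofLex x).1.1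

def etaVal {S : Set Ordinal} {γ : Ordinal} : Eta S γ → WithBot ℚ := Subtype.val

lemma etaProp {S : Set Ordinal} {γ : Ordinal} (a : Eta S γ) : γ ∈ S ∨ etaVal a ≠ ⊥ :=
  Subtype.prop a

lemma eta_lt_iff {S : Set Ordinal} {γ : Ordinal} {a b : Eta S γ} :
    a < b ↔ etaVal a < etaVal b := Iff.rfl

def PhiMk (S : Set Ordinal) {γ : Ordinal} (hγ : γ < omega1) (q : Eta S γ) : Phi S 0 omega1 :=
  toLex ⟨⟨γ, Set.mem_Ico.mpr ⟨zero_le, hγ⟩⟩, q⟩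

lemma PhiMk_idx (S : Set Ordinal) {γ : Ordinal} (hγ : γ < omega1) (q : Eta S γ) :
    PhiIdx (PhiMk S hγ q) = γ := rfl

lemma PhiIdx_lt_omega1 {S : Set Ordinal} (x : Phi S 0 omega1) : PhiIdx x < omega1 :=
  ((ofLex x).1.2).2

lemma PhiIdx_mono {S : Set Ordinal} {x y : Phi S 0 omega1} (h : x ≤ y) :
    PhiIdx x ≤ PhiIdx y := by
  rcases Sigma.Lex.le_def.mp h with h1 | ⟨h1, -⟩
  · exact le_of_lt h1
  · exact le_of_eq (congrArg Subtype.val h1)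

lemma Phi_lt_of_idx_lt {S : Set Ordinal} {x y : Phi S 0 omega1} (h : PhiIdx x < PhiIdx y) :
    x < y :=
  Sigma.Lex.lt_def.mpr (Or.inl h)

lemma Phi_ext {S : Set Ordinal} {x y : Phi S 0 omega1} (h1 : PhiIdx x = PhiIdx y)
    (h2 : etaVal ((ofLex x).2) = etaVal ((ofLex y).2)) : x = y := by
  obtain ⟨⟨γ₁, p₁⟩, q₁⟩ := x
  obtain ⟨⟨γ₂, p₂⟩, q₂⟩ := y
  have h1' : γ₁ = γ₂ := h1
  subst h1'
  have : q₁ = q₂ := Subtype.ext h2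
  subst this
  rfl

lemma Phi_lt_of_eq_idx {S : Set Ordinal} {x y : Phi S 0 omega1} (h1 : PhiIdx x = PhiIdx y)
    (h2 : etaVal ((ofLex x).2) < etaVal ((ofLex y).2)) : x < y := by
  obtain ⟨⟨γ₁, p₁⟩, q₁⟩ := x
  obtain ⟨⟨γ₂, p₂⟩, q₂⟩ := y
  have h1' : γ₁ = γ₂ := h1
  subst h1'
  exact Sigma.Lex.lt_def.mpr (Or.inr ⟨rfl, h2⟩)

lemma Phi_bot_min {S : Set Ordinal} {c : Ordinal} (hc : c < omega1) (hcS : c ∈ S)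
    {x : Phi S 0 omega1} (hx : c ≤ PhiIdx x) :
    PhiMk S hc ⟨⊥, Or.inl hcS⟩ ≤ x := by
  by_contra hlt
  rw [not_le] at hlt
  rcases Sigma.Lex.lt_def.mp hlt with h1 | ⟨h1, h2⟩
  · exact absurd (lt_of_lt_of_le h1 hx) (lt_irrefl _)
  · exact not_lt_bot (eta_lt_iff.mp h2)

lemma key {S S' : Set Ordinal} (f : Phi S 0 omega1 ≃o Phi S' 0 omega1) {c : Ordinal}
    (hc : c < omega1) (hcut : ∀ x, PhiIdx x < c ↔ PhiIdx (f x) < c)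
    (hcS : c ∈ S) : c ∈ S' := by
  by_contra hcS'
  set b : Phi S 0 omega1 := PhiMk S hc ⟨⊥, Or.inl hcS⟩ with hb
  have hbidx : PhiIdx b = c := rfl
  -- f b is the minimum of { z | c ≤ PhiIdx z } in Phi S'
  have hymin : ∀ z : Phi S' 0 omega1, c ≤ PhiIdx z → f b ≤ z := by
    intro z hz
    have h1 : c ≤ PhiIdx (f.symm z) := by
      by_contra h
      rw [not_le] at h
      have h2 := (hcut _).mp h
      rw [OrderIso.apply_symm_apply] at h2
      exact absurd (lt_of_le_of_lt hz h2) (lt_irrefl _)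
    have h3 : b ≤ f.symm z := Phi_bot_min hc hcS h1
    calc f b ≤ f (f.symm z) := f.le_iff_le.mpr h3
      _ = z := f.apply_symm_apply z
  have hyc : c ≤ PhiIdx (f b) := by
    by_contra h
    rw [not_le] at h
    have h2 := (hcut b).mpr h
    rw [hbidx] at h2
    exact lt_irrefl _ h2
  have hz0le : f b ≤ PhiMk S' hc ⟨((0:ℚ) : WithBot ℚ), Or.inr (by simp)⟩ :=
    hymin _ (le_of_eq rfl)
  have hyeq : PhiIdx (f b) = c := le_antisymm (PhiIdx_mono hz0le) hyc
  have hvne : etaVal ((ofLex (f b)).2) ≠ ⊥ := by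
    refine (etaProp _).resolve_left ?_
    have : PhiIdx (f b) ∉ S' := fun h => hcS' (hyeq ▸ h)
    exact this
  obtain ⟨r, hr⟩ := WithBot.ne_bot_iff_exists.mp hvne
  have hw : PhiMk S' hc ⟨((r - 1 : ℚ) : WithBot ℚ), Or.inr (by simp)⟩ < f b := by
    refine Phi_lt_of_eq_idx (by exact hyeq.symm) ?_
    show ((r - 1 : ℚ) : WithBot ℚ) < etaVal ((ofLex (f b)).2)
    rw [← hr]
    exact_mod_cast sub_one_lt r
  exact absurd hw (not_lt.mpr (hymin _ (le_of_eq rfl)))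

lemma slice_countable {S : Set Ordinal} {δ : Ordinal.{0}} (hδ : δ < omega1) :
    {x : Phi S 0 omega1 | PhiIdx x < δ}.Countable := by
  rw [← Set.countable_coe_iff]
  have h1 : Countable (Iio δ) := (countable_Iio_of_lt_omega1 hδ).to_subtype
  have h2 : Countable ((Iio δ) × WithBot ℚ) := inferInstance
  refine Function.Injective.countable
    (f := fun x : {x : Phi S 0 omega1 | PhiIdx x < δ} =>
      ((⟨PhiIdx x.1, x.2⟩ : Iio δ), etaVal (ofLex x.1).2)) ?_
  intro a b h
  have e1 : PhiIdx a.1 = PhiIdx b.1 := congrArg (fun p => (Prod.fst p).1) h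
  have e2 : etaVal (ofLex a.1).2 = etaVal (ofLex b.1).2 := congrArg Prod.snd h
  exact Subtype.ext (Phi_ext e1 e2)

lemma succ_lt_omega1 {a : Ordinal} (h : a < omega1) : a + 1 < omega1 := by
  rw [Ordinal.add_one_eq_succ]
  exact omega1_isLimit.succ_lt h

lemma lt_add_one' (a : Ordinal) : a < a + 1 := by
  rw [Ordinal.add_one_eq_succ]
  exact Order.lt_succ a

lemma exists_closure {S S' : Set Ordinal} (f : Phi S 0 omega1 ≃o Phi S' 0 omega1)
    {δ₀ : Ordinal} (h0 : δ₀ < omega1) :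
    ∃ c, δ₀ < c ∧ c < omega1 ∧ ∀ x, PhiIdx x < c ↔ PhiIdx (f x) < c := by
  set A : Ordinal → Set Ordinal := fun δ =>
    ((fun x : Phi S 0 omega1 => PhiIdx (f x) + 1) '' {x | PhiIdx x < δ}) ∪
    ((fun y : Phi S' 0 omega1 => PhiIdx (f.symm y) + 1) '' {y | PhiIdx y < δ}) ∪ {δ + 1}
    with hA
  have hAlt : ∀ δ, δ < omega1 → ∀ a ∈ A δ, a < omega1 := by
    rintro δ hδ a ((⟨x, -, rfl⟩ | ⟨y, -, rfl⟩) | rfl)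
    · exact succ_lt_omega1 (PhiIdx_lt_omega1 _)
    · exact succ_lt_omega1 (PhiIdx_lt_omega1 _)
    · exact succ_lt_omega1 hδ
  have hAc : ∀ δ, δ < omega1 → (A δ).Countable := fun δ hδ =>
    (((slice_countable hδ).image _).union ((slice_countable hδ).image _)).union
      (countable_singleton _)
  set u : Ordinal → Ordinal := fun δ => sSup (A δ) with hu
  have hu_lt : ∀ δ, δ < omega1 → u δ < omega1 := fun δ hδ =>
    csSup_lt_omega1 (hAc δ hδ) (hAlt δ hδ)
  have hmem_le : ∀ δ, δ < omega1 → ∀ a ∈ A δ, a ≤ u δ := fun δ hδ a ha =>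
    le_csSup (bddAbove_of_lt_omega1 (hAlt δ hδ)) ha
  have hu_gt : ∀ δ, δ < omega1 → δ < u δ := fun δ hδ =>
    lt_of_lt_of_le (lt_add_one' δ) (hmem_le δ hδ _ (mem_union_right _ rfl))
  set it : ℕ → Ordinal := fun n => u^[n] (δ₀ + 1) with hit
  have hit_succ : ∀ n, it (n + 1) = u (it n) := fun n => Function.iterate_succ_apply' u n _
  have hit_lt : ∀ n, it n < omega1 := by
    intro n
    induction n with
    | zero => exact succ_lt_omega1 h0
    | succ n ih => rw [hit_succ]; exact hu_lt _ ih
  set c : Ordinal := sSup (range it) with hcdef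
  have hbdd : BddAbove (range it) := by
    apply bddAbove_of_lt_omega1
    rintro a ⟨n, rfl⟩
    exact hit_lt n
  have hit_le : ∀ n, it n ≤ c := fun n => le_csSup hbdd ⟨n, rfl⟩
  have hc_lt : c < omega1 := by
    apply csSup_lt_omega1 (countable_range it)
    rintro a ⟨n, rfl⟩
    exact hit_lt n
  refine ⟨c, lt_of_lt_of_le (lt_add_one' δ₀) (hit_le 0), hc_lt, fun x => ?_⟩
  constructor
  · intro h
    obtain ⟨a, ⟨n, rfl⟩, hlt⟩ := exists_lt_of_lt_csSup (Set.range_nonempty it) h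
    have hmem : PhiIdx (f x) + 1 ∈ A (it n) :=
      mem_union_left _ (mem_union_left _ ⟨x, hlt, rfl⟩)
    have := (hmem_le _ (hit_lt n) _ hmem).trans ((hit_succ n).symm ▸ hit_le (n + 1))
    exact lt_of_lt_of_le (lt_add_one' _) this
  · intro h
    obtain ⟨a, ⟨n, rfl⟩, hlt⟩ := exists_lt_of_lt_csSup (Set.range_nonempty it) h
    have hmem : PhiIdx (f.symm (f x)) + 1 ∈ A (it n) :=
      mem_union_left _ (mem_union_right _ ⟨f x, hlt, rfl⟩)
    rw [OrderIso.symm_apply_apply] at hmem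
    have := (hmem_le _ (hit_lt n) _ hmem).trans ((hit_succ n).symm ▸ hit_le (n + 1))
    exact lt_of_lt_of_le (lt_add_one' _) this

theorem stmt1 (S S' : Set Ordinal)
    (hS : ∀ γ ∈ S, γ < omega1 ∧ Order.IsSuccLimit γ)
    (hS' : ∀ γ ∈ S', γ < omega1 ∧ Order.IsSuccLimit γ)
    (hstat : ∀ C : Set Ordinal, IsClubOmega1 C → (C ∩ (symmDiff S S')).Nonempty) :
    ¬ Nonempty (Phi S 0 omega1 ≃o Phi S' 0 omega1) := by
  rintro ⟨f⟩
  set C : Set Ordinal :=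
    {δ | δ < omega1 ∧ ∀ x : Phi S 0 omega1, PhiIdx x < δ ↔ PhiIdx (f x) < δ} with hC
  have hclub : IsClubOmega1 C := by
    refine ⟨fun c hc => hc.1, fun δ hδ => ?_, ?_⟩
    · obtain ⟨c, h1, h2, h3⟩ := exists_closure f hδ
      exact ⟨c, ⟨h2, h3⟩, h1⟩
    · intro X hXC hne hlt
      have hbdd : BddAbove X := bddAbove_of_lt_omega1 fun a ha => (hXC ha).1
      refine ⟨hlt, fun x => ?_⟩
      have step : ∀ (g : Ordinal), (g < sSup X ↔ ∃ b ∈ X, g < b) := fun g =>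
        ⟨fun h => exists_lt_of_lt_csSup hne h,
         fun ⟨b, hb, h⟩ => lt_of_lt_of_le h (le_csSup hbdd hb)⟩
      rw [step, step]
      constructor
      · rintro ⟨b, hb, h⟩
        exact ⟨b, hb, ((hXC hb).2 x).mp h⟩
      · rintro ⟨b, hb, h⟩
        exact ⟨b, hb, ((hXC hb).2 x).mpr h⟩
  obtain ⟨c, hcC, hcd⟩ := hstat C hclub
  rcases Set.mem_symmDiff.mp hcd with ⟨hc1, hc2⟩ | ⟨hc1, hc2⟩
  · exact hc2 (key f hcC.1 hcC.2 hc1)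
  · refine hc2 (key f.symm hcC.1 (fun y => ?_) hc1)
    have := (hcC.2 (f.symm y)).symm
    rwa [OrderIso.apply_symm_apply] at this
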